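/- arXiv:2311.00581 — 5 statements merged into one kernel-verified Lean document; each statement's English description precedes it below -/
import Mathlib

section
/- For any formula A of the bimodal language L_pf, PF proves the implication ⋀Φ(A) → A if and only if A is a theorem of PF^ω, where Φ(A) = { □p B → □f B : □p B is a subformula of A }. -/
namespace PFPaper

/-- Formulas of the bimodal language `L_pf`, with propositional variables indexed by `ℕ`,
connectives `¬, ∧, ∨, →` and two modal operators `□p` (`boxp`) and `□f` (`boxf`). -/
inductive Formula : Type
  | var : ℕ → Formula
  | neg : Formula → Formula
  | and : Formula → Formula → Formula
  | or : Formula → Formula → Formula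
  | imp : Formula → Formula → Formula
  | boxp : Formula → Formula
  | boxf : Formula → Formula
  deriving DecidableEq

/-- `◇p A := ¬□p¬A`. -/
def diap (A : Formula) : Formula := .neg (.boxp (.neg A))

/-- `◇f A := ¬□f¬A`. -/
def diaf (A : Formula) : Formula := .neg (.boxf (.neg A))

/-- `A ↔ B` as an abbreviation: `(A → B) ∧ (B → A)`. -/
def iffF (A B : Formula) : Formula := .and (.imp A B) (.imp B A)

/-- `A` is a propositional tautology of `L_pf`: every Boolean assignment that treats
variables and boxed formulas as atoms and respects the connectives makes `A` true. -/
def Taut (A : Formula) : Prop :=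
  ∀ f : Formula → Bool,
    (∀ B, f (.neg B) = !(f B)) →
    (∀ B C, f (.and B C) = (f B && f C)) →
    (∀ B C, f (.or B C) = (f B || f C)) →
    (∀ B C, f (.imp B C) = (!(f B) || f C)) →
    f A = true

/-- The bimodal logic `PF`. -/
inductive PF : Formula → Prop
  | taut {A} : Taut A → PF A
  | kp (A B) : PF (.imp (.boxp (.imp A B)) (.imp (.boxp A) (.boxp B)))
  | lob (A) : PF (.imp (.boxp (.imp (.boxp A) A)) (.boxp A))
  | kf (A B) : PF (.imp (.boxf (.imp A B)) (.imp (.boxf A) (.boxf B)))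
  | tf (A) : PF (.imp (.boxf A) A)
  | fourf (A) : PF (.imp (.boxf A) (.boxf (.boxf A)))
  | dot2f (A) : PF (.imp (diaf (.boxf A)) (.boxf (diaf A)))
  | pf1 (A) : PF (.imp (.boxp A) (.boxf (.boxp A)))
  | pf2 (A) : PF (.imp (diap A) (.boxf (diap A)))
  | pf3 (A) : PF (.imp (.boxp A) (.boxp (.boxf A)))
  | mp {A B} : PF (.imp A B) → PF A → PF B
  | necp {A} : PF A → PF (.boxp A)
  | necf {A} : PF A → PF (.boxf A)

/-- The logic `PF^ω`: axioms are all theorems of `PF` together with all formulas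
`□p A → □f A`; the sole rule is modus ponens. -/
inductive PFomega : Formula → Prop
  | ofPF {A} : PF A → PFomega A
  | reflAx (A) : PFomega (.imp (.boxp A) (.boxf A))
  | mp {A B} : PFomega (.imp A B) → PFomega A → PFomega B

section Semantics

variable {W : Type}

/-- Kripke satisfaction on a frame `(W, R, S)` (`R` = `⊏` interprets `□p`,
`S` = `≼` interprets `□f`) with valuation `V`. -/
def Sat (R S : W → W → Prop) (V : W → ℕ → Prop) : W → Formula → Prop
  | w, .var n => V w n
  | w, .neg A => ¬ Sat R S V w A
  | w, .and A B => Sat R S V w A ∧ Sat R S V w B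
  | w, .or A B => Sat R S V w A ∨ Sat R S V w B
  | w, .imp A B => Sat R S V w A → Sat R S V w B
  | w, .boxp A => ∀ v, R w v → Sat R S V v A
  | w, .boxf A => ∀ v, S w v → Sat R S V v A

/-- `A` is valid on the frame `(W, R, S)`. -/
def ValidOn (R S : W → W → Prop) (A : Formula) : Prop :=
  ∀ (V : W → ℕ → Prop) (w : W), Sat R S V w A

/-- `(W, R, S)` is a `PF`-frame: all theorems of `PF` are valid on it. -/
def IsPFFrame (R S : W → W → Prop) : Prop :=
  ∀ A : Formula, PF A → ValidOn R S A

/-- The symmetric closure `∼` of `≼`. -/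
def SymCl (S : W → W → Prop) (x y : W) : Prop := S x y ∨ S y x

/-- `∼⁺`: the transitive closure of the symmetric closure of `≼`. -/
def EqCl (S : W → W → Prop) : W → W → Prop := Relation.TransGen (SymCl S)

/-- The cluster of `x`: its `∼⁺`-equivalence class. -/
def cluster (S : W → W → Prop) (x : W) : Set W := {y | EqCl S x y}

/-- A frame is nice iff `x ⊏ z` and `y ≼ z` imply `x ⊏ y`. -/
def Nice (R S : W → W → Prop) : Prop := ∀ x y z : W, R x z → S y z → R x y

/-- A nice `PF`-frame is rooted iff there is a `⊏`-root cluster and every cluster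
has a `≼`-root element. -/
def Rooted (R S : W → W → Prop) : Prop :=
  (∃ r : W, ∀ x : W, cluster S r = cluster S x ∨ R r x) ∧
  (∀ x : W, ∃ y ∈ cluster S x, ∀ z ∈ cluster S x, S y z)

/-- The cluster of `x`, preordered by `≼`, is a pre-Boolean algebra: its quotient by
`x ≈ y ↔ (x ≼ y ∧ y ≼ x)` forms a Boolean algebra, i.e. there is a Boolean algebra `B`
and a surjection `f` from the cluster onto `B` with `a ≼ b ↔ f a ≤ f b`. -/
def ClusterPBA (S : W → W → Prop) (x : W) : Prop :=
  ∃ (B : Type) (inst : BooleanAlgebra B) (f : cluster S x → B),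
    Function.Surjective f ∧ ∀ a b : cluster S x, S a.1 b.1 ↔ inst.le (f a) (f b)

end Semantics

/-- The list of subformulas of a formula. -/
def subf : Formula → List Formula
  | .var n => [.var n]
  | .neg A => .neg A :: subf A
  | .and A B => .and A B :: (subf A ++ subf B)
  | .or A B => .or A B :: (subf A ++ subf B)
  | .imp A B => .imp A B :: (subf A ++ subf B)
  | .boxp A => .boxp A :: subf A
  | .boxf A => .boxf A :: subf A

/-- `Φ(A) = { □p B → □f B : □p B ∈ Sub(A) }`. -/
def Phi (A : Formula) : List Formula :=
  (subf A).filterMap fun B =>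
    match B with
    | .boxp C => some (.imp (.boxp C) (.boxf C))
    | _ => none

/-- Conjunction of a finite list of formulas (a fixed tautology if the list is empty). -/
def conjList : List Formula → Formula
  | [] => .imp (.var 0) (.var 0)
  | [B] => B
  | B :: C :: t => .and B (conjList (C :: t))

/-- An injective, effective coding of formulas by natural numbers. -/
def encodeF : Formula → ℕ
  | .var n => Nat.pair 0 n
  | .neg A => Nat.pair 1 (encodeF A)
  | .and A B => Nat.pair 2 (Nat.pair (encodeF A) (encodeF B))
  | .or A B => Nat.pair 3 (Nat.pair (encodeF A) (encodeF B))
  | .imp A B => Nat.pair 4 (Nat.pair (encodeF A) (encodeF B))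
  | .boxp A => Nat.pair 5 (encodeF A)
  | .boxf A => Nat.pair 6 (encodeF A)

/-- Formulas of the unimodal language `L_p` (only `□p`, written `box`). -/
inductive LpForm : Type
  | var : ℕ → LpForm
  | neg : LpForm → LpForm
  | and : LpForm → LpForm → LpForm
  | or : LpForm → LpForm → LpForm
  | imp : LpForm → LpForm → LpForm
  | box : LpForm → LpForm
  deriving DecidableEq

/-- Propositional tautologies of `L_p`. -/
def TautLp (A : LpForm) : Prop :=
  ∀ f : LpForm → Bool,
    (∀ B, f (.neg B) = !(f B)) →
    (∀ B C, f (.and B C) = (f B && f C)) →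
    (∀ B C, f (.or B C) = (f B || f C)) →
    (∀ B C, f (.imp B C) = (!(f B) || f C)) →
    f A = true

/-- The provability logic `GL` in the language `L_p`. -/
inductive GLLogic : LpForm → Prop
  | taut {A} : TautLp A → GLLogic A
  | k (A B) : GLLogic (.imp (.box (.imp A B)) (.imp (.box A) (.box B)))
  | lob (A) : GLLogic (.imp (.box (.imp (.box A) A)) (.box A))
  | mp {A B} : GLLogic (.imp A B) → GLLogic A → GLLogic B
  | nec {A} : GLLogic A → GLLogic (.box A)

/-- Solovay's logic `S`: axioms are all theorems of `GL` and all `□p A → A`;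
the sole rule is modus ponens. -/
inductive SLogic : LpForm → Prop
  | ofGL {A} : GLLogic A → SLogic A
  | reflAx (A) : SLogic (.imp (.box A) A)
  | mp {A B} : SLogic (.imp A B) → SLogic A → SLogic B

/-- Embedding of `L_p` into `L_pf` (`box ↦ □p`). -/
def LpForm.toFormula : LpForm → Formula
  | .var n => .var n
  | .neg A => .neg A.toFormula
  | .and A B => .and A.toFormula B.toFormula
  | .or A B => .or A.toFormula B.toFormula
  | .imp A B => .imp A.toFormula B.toFormula
  | .box A => .boxp A.toFormula

/-- The fusion `GL⊗Triv` in the language `L_pf`: the `GL`-axioms for `□p`,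
the axiom `A ↔ □f A`, with modus ponens and necessitation for `□p`. -/
inductive GLTriv : Formula → Prop
  | taut {A} : Taut A → GLTriv A
  | kp (A B) : GLTriv (.imp (.boxp (.imp A B)) (.imp (.boxp A) (.boxp B)))
  | lob (A) : GLTriv (.imp (.boxp (.imp (.boxp A) A)) (.boxp A))
  | triv (A) : GLTriv (iffF A (.boxf A))
  | mp {A B} : GLTriv (.imp A B) → GLTriv A → GLTriv B
  | necp {A} : GLTriv A → GLTriv (.boxp A)

/-- Formulas of the unimodal language `L_f` (only `□f`, written `box`). -/
inductive LfForm : Type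
  | var : ℕ → LfForm
  | neg : LfForm → LfForm
  | and : LfForm → LfForm → LfForm
  | or : LfForm → LfForm → LfForm
  | imp : LfForm → LfForm → LfForm
  | box : LfForm → LfForm
  deriving DecidableEq

/-- `◇f A := ¬□f¬A` in `L_f`. -/
def LfForm.dia (A : LfForm) : LfForm := .neg (.box (.neg A))

/-- Propositional tautologies of `L_f`. -/
def TautLf (A : LfForm) : Prop :=
  ∀ f : LfForm → Bool,
    (∀ B, f (.neg B) = !(f B)) →
    (∀ B C, f (.and B C) = (f B && f C)) →
    (∀ B C, f (.or B C) = (f B || f C)) →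
    (∀ B C, f (.imp B C) = (!(f B) || f C)) →
    f A = true

/-- The modal logic `S4.2` in the language `L_f`. -/
inductive S42 : LfForm → Prop
  | taut {A} : TautLf A → S42 A
  | k (A B) : S42 (.imp (.box (.imp A B)) (.imp (.box A) (.box B)))
  | t (A) : S42 (.imp (.box A) A)
  | four (A) : S42 (.imp (.box A) (.box (.box A)))
  | dot2 (A) : S42 (.imp (LfForm.dia (.box A)) (.box (LfForm.dia A)))
  | mp {A B} : S42 (.imp A B) → S42 A → S42 B
  | nec {A} : S42 A → S42 (.box A)

/-- Embedding of `L_f` into `L_pf` (`box ↦ □f`). -/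
def LfForm.toFormula : LfForm → Formula
  | .var n => .var n
  | .neg A => .neg A.toFormula
  | .and A B => .and A.toFormula B.toFormula
  | .or A B => .or A.toFormula B.toFormula
  | .imp A B => .imp A.toFormula B.toFormula
  | .box A => .boxf A.toFormula

/-- `L_pf`-formulas with no occurrence of `□p`, i.e. `L_f`-formulas. -/
inductive NoBoxp : Formula → Prop
  | var (n) : NoBoxp (.var n)
  | neg {A} : NoBoxp A → NoBoxp (.neg A)
  | and {A B} : NoBoxp A → NoBoxp B → NoBoxp (.and A B)
  | or {A B} : NoBoxp A → NoBoxp B → NoBoxp (.or A B)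
  | imp {A B} : NoBoxp A → NoBoxp B → NoBoxp (.imp A B)
  | boxf {A} : NoBoxp A → NoBoxp (.boxf A)

/-- Clauses of `□p`-CNF: disjunctions `□p D_0 ∨ ⋯ ∨ □p D_{k-1} ∨ ◇p E ∨ F`
with `F` an `L_f`-formula (each of the three parts may be absent). -/
inductive IsClause : Formula → Prop
  | lf {F} : NoBoxp F → IsClause F
  | dia (E : Formula) : IsClause (diap E)
  | diaOr (E : Formula) {F} : NoBoxp F → IsClause (.or (diap E) F)
  | boxAlone (D : Formula) : IsClause (.boxp D)
  | boxOr (D : Formula) {C} : IsClause C → IsClause (.or (.boxp D) C)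

/-- A formula in `□p`-conjunctive normal form: a conjunction of clauses. -/
inductive IsCNF : Formula → Prop
  | clause {C} : IsClause C → IsCNF C
  | and {A B} : IsCNF A → IsCNF B → IsCNF (.and A B)

/-- The `□p`-modal degree of a formula. -/
def deg : Formula → ℕ
  | .var _ => 0
  | .neg A => deg A
  | .and A B => max (deg A) (deg B)
  | .or A B => max (deg A) (deg B)
  | .imp A B => max (deg A) (deg B)
  | .boxf A => deg A
  | .boxp A => deg A + 1

/-!
Left to right: every member of `Φ(A)` is an axiom of `PF^ω`. Right to left: a `PF^ω`-derivation
of `A` uses finitely many axioms `□p Cᵢ → □f Cᵢ`, so `PF ⊢ ⋀ᵢ (□p Cᵢ → □f Cᵢ) → A`. If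
`PF ⊬ ⋀Φ(A) → A`, some maximal consistent `w₀` contains `Φ(A)` and `¬A`. Stack ω levels, each a
copy of the canonical `□f`-frame, below the canonical model of `PF`: a world of level `k` sees by
`□p` the worlds of lower levels lying in the `□f`-cone of `w₀` and the canonical `□p`-successors
of `w₀`. This model validates `PF`: the `□f`-axioms and the mixed axioms by frame conditions, Löb
by induction on the level (and by the truth lemma on the canonical part). A formula of
`□p`-degree at most `k` has the same truth value at all levels `≥ k`, so at a level above every
`deg Cᵢ` the axioms `□p Cᵢ → □f Cᵢ`, hence `A`, are true at the copy of `w₀`. But since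
`□p C → □f C ∈ w₀` for every `□p C` occurring in `A`, a subformula of `A` is true at a level world
of the cone of `w₀` iff it belongs to it; so `A ∈ w₀`, a contradiction.
-/

structure BoolValuation where
  toFun : Formula → Bool
  map_neg : ∀ B, toFun (.neg B) = !(toFun B)
  map_and : ∀ B C, toFun (.and B C) = (toFun B && toFun C)
  map_or : ∀ B C, toFun (.or B C) = (toFun B || toFun C)
  map_imp : ∀ B C, toFun (.imp B C) = (!(toFun B) || toFun C)

def Formula.bot : Formula := .neg (.imp (.var 0) (.var 0))

def impList (L : List Formula) (X : Formula) : Formula := L.foldr .imp X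

namespace BoolValuation

instance : CoeFun BoolValuation fun _ => Formula → Bool := ⟨toFun⟩

variable (f : BoolValuation)

@[simp] theorem neg_eq_true (B : Formula) : f (.neg B) = true ↔ ¬ f B = true := by
  simp [f.map_neg]

@[simp] theorem imp_eq_true (B C : Formula) :
    f (.imp B C) = true ↔ (f B = true → f C = true) := by
  rw [f.map_imp]; cases f B <;> simp

@[simp] theorem and_eq_true (B C : Formula) :
    f (.and B C) = true ↔ f B = true ∧ f C = true := by
  simp [f.map_and]

@[simp] theorem or_eq_true (B C : Formula) :
    f (.or B C) = true ↔ f B = true ∨ f C = true := by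
  simp [f.map_or]

@[simp] theorem bot_ne_true : ¬ f .bot = true := by simp [Formula.bot]

@[simp] theorem impList_eq_true (L : List Formula) (X : Formula) :
    f (impList L X) = true ↔ ((∀ Z ∈ L, f Z = true) → f X = true) := by
  induction L with
  | nil => simp [impList]
  | cons Z L ih =>
    simp only [impList, List.foldr_cons] at ih ⊢
    grind [imp_eq_true]

@[simp] theorem conjList_eq_true (L : List Formula) :
    f (conjList L) = true ↔ ∀ Z ∈ L, f Z = true := by
  induction L using conjList.induct with
  | case1 => simp [conjList]
  | case2 B => simp [conjList]
  | case3 B C t ih => simp [conjList, ih]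

end BoolValuation

theorem Taut.of_forall_valuation {A : Formula} (h : ∀ f : BoolValuation, f A = true) : Taut A :=
  fun f hn ha ho hi => h ⟨f, hn, ha, ho, hi⟩

theorem Taut.valuation_eq_true {A : Formula} (h : Taut A) (f : BoolValuation) : f A = true :=
  h f f.map_neg f.map_and f.map_or f.map_imp

theorem PF.of_impList {L : List Formula} {X : Formula} (hX : PF (impList L X))
    (hL : ∀ Z ∈ L, PF Z) : PF X := by
  induction L with
  | nil => exact hX
  | cons Z L ih => exact ih (hX.mp (hL Z (by simp))) fun Y hY => hL Y (by simp [hY])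

theorem PF.of_taut_consequence {L : List Formula} {X : Formula} (hL : ∀ Z ∈ L, PF Z)
    (h : ∀ f : BoolValuation, (∀ Z ∈ L, f Z = true) → f X = true) : PF X :=
  .of_impList (.taut (.of_forall_valuation fun f => (f.impList_eq_true L X).2 (h f))) hL

def Derivable (Γ : Set Formula) (X : Formula) : Prop :=
  ∃ L : List Formula, (∀ Z ∈ L, Z ∈ Γ) ∧ PF (impList L X)

def Consistent (Γ : Set Formula) : Prop := ¬ Derivable Γ .bot

namespace Derivable

variable {Γ : Set Formula} {X Y : Formula}

theorem of_PF (h : PF X) : Derivable Γ X := ⟨[], by simp, h⟩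

theorem of_mem (h : X ∈ Γ) : Derivable Γ X :=
  ⟨[X], by simpa using h, .taut (.of_forall_valuation fun f => by simp)⟩

theorem mp : Derivable Γ (.imp X Y) → Derivable Γ X → Derivable Γ Y
  | ⟨L, hL, hXY⟩, ⟨M, hM, hX⟩ =>
    ⟨L ++ M, by simpa [or_imp, forall_and] using ⟨hL, hM⟩,
      .of_taut_consequence (L := [_, _]) (by simpa using ⟨hXY, hX⟩) fun f => by
        simp only [List.mem_cons, List.not_mem_nil, or_false, forall_eq_or_imp, forall_eq,
          f.impList_eq_true, f.imp_eq_true, List.mem_append]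
        grind⟩

theorem of_impList {L : List Formula} (h : Derivable Γ (impList L X))
    (hL : ∀ Z ∈ L, Derivable Γ Z) : Derivable Γ X := by
  induction L with
  | nil => exact h
  | cons Z L ih => exact ih (h.mp (hL Z (by simp))) fun Y hY => hL Y (by simp [hY])

theorem of_taut_consequence {L : List Formula} (hL : ∀ Z ∈ L, Derivable Γ Z)
    (h : ∀ f : BoolValuation, (∀ Z ∈ L, f Z = true) → f X = true) : Derivable Γ X :=
  (of_PF (.taut (.of_forall_valuation fun f => (f.impList_eq_true L X).2 (h f)))).of_impList hL

theorem imp_of_insert : Derivable (insert X Γ) Y → Derivable Γ (.imp X Y)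
  | ⟨L, hL, hY⟩ => by
    classical
    refine ⟨L.filter (· ≠ X), fun Z hZ => ?_, .of_taut_consequence (L := [_]) (by simpa using hY)
      fun f => ?_⟩
    · simp only [List.mem_filter, decide_eq_true_eq] at hZ
      exact (Set.mem_insert_iff.1 (hL Z hZ.1)).resolve_left hZ.2
    · simp only [List.mem_singleton, forall_eq, f.impList_eq_true, f.imp_eq_true,
        List.mem_filter, decide_eq_true_eq]
      grind

theorem by_contra (h : Derivable (insert (.neg X) Γ) .bot) : Derivable Γ X :=
  of_taut_consequence (L := [_]) (by simpa using imp_of_insert h) fun f => by simp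

end Derivable

theorem Consistent.not_derivable_neg {Γ : Set Formula} {X : Formula} (hΓ : Consistent Γ)
    (hX : Derivable Γ X) : ¬ Derivable Γ (.neg X) := fun hnX =>
  hΓ (.of_taut_consequence (L := [X, .neg X]) (by simpa using ⟨hX, hnX⟩) fun f => by simp)

theorem PF.conjList_imp_of_derivable {M : List Formula} {X : Formula}
    (h : Derivable {Z | Z ∈ M} X) : PF (.imp (conjList M) X) := by
  obtain ⟨L, hL, hX⟩ := h
  refine .of_taut_consequence (L := [_]) (by simpa using hX) fun f => ?_
  simp only [List.mem_singleton, forall_eq, f.impList_eq_true, f.imp_eq_true,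
    f.conjList_eq_true]
  exact fun hLX hM => hLX fun Z hZ => hM Z (hL Z hZ)

theorem Consistent.union {Γ Δ : Set Formula}
    (h : ∀ X, Derivable Γ X → Derivable Δ (.neg X) → False) : Consistent (Γ ∪ Δ) := by
  rintro ⟨L, hL, hbot⟩
  classical
  set L₂ := L.filter (· ∉ Γ)
  refine h (impList L₂ .bot) ⟨L.filter (· ∈ Γ), by simp, ?_⟩ ⟨L₂, fun Z hZ => ?_, ?_⟩
  · refine .of_taut_consequence (L := [_]) (by simpa using hbot) fun f => ?_
    simp only [List.mem_singleton, forall_eq, f.impList_eq_true, f.bot_ne_true, L₂,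
      List.mem_filter, decide_eq_true_eq]
    grind
  · simp only [L₂, List.mem_filter, decide_eq_true_eq] at hZ
    exact (hL Z hZ.1).resolve_left hZ.2
  · exact .taut (.of_forall_valuation fun f => by simp)

theorem exists_maximal_consistent {Γ : Set Formula} (h : Consistent Γ) :
    ∃ w, Γ ⊆ w ∧ Maximal Consistent w := by
  refine zorn_subset_nonempty {Δ | Consistent Δ} (fun c hcons hchain hne => ?_) Γ h
  refine ⟨⋃₀ c, fun ⟨L, hL, hbot⟩ => ?_, fun _ => Set.subset_sUnion_of_mem⟩
  obtain ⟨Δ, hΔ, hLΔ⟩ := hchain.directedOn.exists_mem_subset_of_finite_of_subset_sUnion hne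
    L.finite_toSet hL
  exact hcons hΔ ⟨L, hLΔ, hbot⟩

structure MCS where
  carrier : Set Formula
  consistent : Consistent carrier
  mem_or_neg_mem : ∀ X, X ∈ carrier ∨ .neg X ∈ carrier

namespace MCS

instance : SetLike MCS Formula where
  coe := carrier
  coe_injective x y h := by cases x; cases y; congr

variable (w : MCS) {X Y : Formula}

theorem mem_of_derivable (h : Derivable w X) : X ∈ w :=
  (w.mem_or_neg_mem X).resolve_right fun hn => w.consistent.not_derivable_neg h (.of_mem hn)

theorem mem_of_taut_consequence {L : List Formula} (hL : ∀ Z ∈ L, Z ∈ w)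
    (h : ∀ f : BoolValuation, (∀ Z ∈ L, f Z = true) → f X = true) : X ∈ w :=
  w.mem_of_derivable (.of_taut_consequence (fun Z hZ => .of_mem (hL Z hZ)) h)

theorem mem_of_PF (h : PF X) : X ∈ w := w.mem_of_derivable (.of_PF h)

theorem mem_of_imp_mem (hXY : .imp X Y ∈ w) (hX : X ∈ w) : Y ∈ w :=
  w.mem_of_derivable ((Derivable.of_mem hXY).mp (.of_mem hX))

theorem mem_of_PF_imp (h : PF (.imp X Y)) (hX : X ∈ w) : Y ∈ w :=
  w.mem_of_imp_mem (w.mem_of_PF h) hX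

theorem neg_mem_iff : .neg X ∈ w ↔ X ∉ w :=
  ⟨fun hn hX => w.consistent.not_derivable_neg (.of_mem hX) (.of_mem hn),
    (w.mem_or_neg_mem X).resolve_left⟩

theorem imp_mem_iff : .imp X Y ∈ w ↔ (X ∈ w → Y ∈ w) := by
  refine ⟨w.mem_of_imp_mem, fun h => ?_⟩
  by_cases hX : X ∈ w
  · exact w.mem_of_PF_imp (.taut (.of_forall_valuation fun f => by simp +contextual)) (h hX)
  · exact w.mem_of_PF_imp (.taut (.of_forall_valuation fun f => by simp +contextual))
      (w.neg_mem_iff.2 hX)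

theorem and_mem_iff : .and X Y ∈ w ↔ X ∈ w ∧ Y ∈ w := by
  refine ⟨fun h => ⟨?_, ?_⟩, fun h => ?_⟩
  · exact w.mem_of_PF_imp (.taut (.of_forall_valuation fun f => by simp +contextual)) h
  · exact w.mem_of_PF_imp (.taut (.of_forall_valuation fun f => by simp +contextual)) h
  · exact w.mem_of_taut_consequence (L := [X, Y]) (by simpa using h) fun f => by simp

theorem or_mem_iff : .or X Y ∈ w ↔ X ∈ w ∨ Y ∈ w := by
  refine ⟨fun h => or_iff_not_imp_right.2 fun hY => ?_, fun h => ?_⟩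
  · refine w.mem_of_taut_consequence (L := [.or X Y, .neg Y])
      (by simpa [w.neg_mem_iff] using ⟨h, hY⟩) fun f => ?_
    simp only [List.mem_cons, List.not_mem_nil, or_false, forall_eq_or_imp, forall_eq,
      f.or_eq_true, f.neg_eq_true]
    tauto
  · rcases h with hX | hY
    · exact w.mem_of_PF_imp (.taut (.of_forall_valuation fun f => by simp +contextual)) hX
    · exact w.mem_of_PF_imp (.taut (.of_forall_valuation fun f => by simp +contextual)) hY

end MCS

theorem exists_MCS_superset {Γ : Set Formula} (h : Consistent Γ) : ∃ w : MCS, Γ ⊆ w := by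
  obtain ⟨w, hΓw, hw⟩ := exists_maximal_consistent h
  refine ⟨⟨w, hw.prop, fun X => ?_⟩, hΓw⟩
  by_contra! hX
  have hins : ∀ Y ∉ w, Derivable w (.imp Y .bot) := fun Y hY =>
    .imp_of_insert (not_not.1 fun hcon => hY (hw.mem_of_prop_insert hcon))
  exact hw.prop (.of_taut_consequence (L := [_, _]) (by simpa using ⟨hins _ hX.1, hins _ hX.2⟩)
    fun f => by simp +contextual)

structure IsNormalBox (bx : Formula → Formula) : Prop where
  nec : ∀ {X}, PF X → PF (bx X)
  k : ∀ X Y, PF (.imp (bx (.imp X Y)) (.imp (bx X) (bx Y)))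

theorem isNormalBox_boxp : IsNormalBox .boxp := ⟨.necp, .kp⟩

theorem isNormalBox_boxf : IsNormalBox .boxf := ⟨.necf, .kf⟩

def MCS.Rel (bx : Formula → Formula) (x y : MCS) : Prop := ∀ Z, bx Z ∈ x → Z ∈ y

namespace IsNormalBox

variable {bx : Formula → Formula} {X Y : Formula}

theorem mono (hb : IsNormalBox bx) (h : PF (.imp X Y)) : PF (.imp (bx X) (bx Y)) :=
  (hb.k X Y).mp (hb.nec h)

theorem impList_imp (hb : IsNormalBox bx) (L : List Formula) (X : Formula) :
    PF (.imp (bx (impList L X)) (impList (L.map bx) (bx X))) := by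
  induction L with
  | nil => exact .taut (.of_forall_valuation fun f => by simp [impList])
  | cons Z L ih =>
    refine .of_taut_consequence (L := [_, _]) (by simpa using ⟨hb.k Z (impList L X), ih⟩)
      fun f => ?_
    simp only [List.mem_cons, List.not_mem_nil, or_false, forall_eq_or_imp, forall_eq,
      f.imp_eq_true, List.map_cons, impList, List.foldr_cons]
    tauto

theorem mem_of_derivable (hb : IsNormalBox bx) (w : MCS) (h : Derivable {Z | bx Z ∈ w} X) :
    bx X ∈ w := by
  obtain ⟨L, hL, hX⟩ := h
  refine w.mem_of_derivable ⟨L.map bx, by simpa using hL, ?_⟩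
  exact (hb.impList_imp L X).mp (hb.nec hX)

theorem mem_iff (hb : IsNormalBox bx) (w : MCS) :
    bx X ∈ w ↔ ∀ u : MCS, w.Rel bx u → X ∈ u := by
  refine ⟨fun hX u hu => hu X hX, fun h => ?_⟩
  by_contra hX
  have hcon : Consistent (insert (.neg X) {Z | bx Z ∈ w}) := fun hbot =>
    hX (hb.mem_of_derivable w (.by_contra hbot))
  obtain ⟨u, hu⟩ := exists_MCS_superset hcon
  exact (u.neg_mem_iff.1 (hu (Set.mem_insert _ _))) (h u fun Z hZ => hu (Or.inr hZ))

end IsNormalBox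

-- The usual derivation of `4` from Löb's axiom for `X ∧ □p X`.
theorem PF.boxp_imp_boxp_boxp (X : Formula) : PF (.imp (.boxp X) (.boxp (.boxp X))) := by
  set Y := Formula.and X (.boxp X)
  have hY : PF (.imp (.boxp Y) (.boxp X)) :=
    isNormalBox_boxp.mono (.taut (.of_forall_valuation fun f => by simp +contextual [Y]))
  have hX : PF (.imp (.boxp X) (.boxp (.imp (.boxp Y) Y))) :=
    isNormalBox_boxp.mono (.of_taut_consequence (L := [_]) (by simpa using hY) fun f => by
      simp +contextual [Y])
  have hYX : PF (.imp (.boxp Y) (.boxp (.boxp X))) :=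
    isNormalBox_boxp.mono (.taut (.of_forall_valuation fun f => by simp +contextual [Y]))
  exact .of_taut_consequence (L := [_, _, _]) (by simpa using ⟨hX, PF.lob Y, hYX⟩) fun f => by
    simp only [List.mem_cons, List.not_mem_nil, or_false, forall_eq_or_imp, forall_eq,
      f.imp_eq_true]
    tauto

/-- Löb's axiom is not among these: the canonical part of the model below is not conversely
well-founded, so `sat_of_PF` asks for its instances to be true instead. -/
structure PFFrameConditions {W : Type} (R S : W → W → Prop) : Prop where
  S_refl : ∀ x, S x x
  S_trans : ∀ {x y z}, S x y → S y z → S x z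
  S_confluent : ∀ {x y z}, S x y → S x z → ∃ u, S y u ∧ S z u
  S_comp_R : ∀ {x y z}, S x y → R y z → R x z
  R_comp_S : ∀ {x y z}, R x y → S y z → R x z
  converse_S_comp_R : ∀ {x y z}, S x y → R x z → R y z

namespace MCS

variable {x y z : MCS}

theorem rel_boxp_trans (hxy : x.Rel .boxp y) (hyz : y.Rel .boxp z) : x.Rel .boxp z :=
  fun Z hZ => hyz Z (hxy _ (x.mem_of_PF_imp (.boxp_imp_boxp_boxp Z) hZ))

theorem boxp_mem_iff_of_rel_boxf (hxy : x.Rel .boxf y) {X : Formula} :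
    .boxp X ∈ y ↔ .boxp X ∈ x := by
  have hdn : PF (.imp (.boxp X) (.boxp (.neg (.neg X)))) :=
    isNormalBox_boxp.mono (.taut (.of_forall_valuation fun f => by simp))
  have hdn' : PF (.imp (.boxp (.neg (.neg X))) (.boxp X)) :=
    isNormalBox_boxp.mono (.taut (.of_forall_valuation fun f => by simp))
  refine ⟨fun hy => ?_, fun hx => hxy _ (x.mem_of_PF_imp (.pf1 X) hx)⟩
  by_contra hx
  have hdia : diap (.neg X) ∈ x := x.neg_mem_iff.2 fun h => hx (x.mem_of_PF_imp hdn' h)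
  exact y.neg_mem_iff.1 (hxy _ (x.mem_of_PF_imp (.pf2 _) hdia)) (y.mem_of_PF_imp hdn hy)

theorem rel_boxf_confluent (hxy : x.Rel .boxf y) (hxz : x.Rel .boxf z) :
    ∃ u : MCS, y.Rel .boxf u ∧ z.Rel .boxf u := by
  have hcon : Consistent ({Z | .boxf Z ∈ y} ∪ {Z | .boxf Z ∈ z}) := by
    refine .union fun X hyX hzX => ?_
    have hdia : diaf (.boxf X) ∈ x := x.neg_mem_iff.2 fun h =>
      (y.neg_mem_iff.1 (hxy _ h)) (isNormalBox_boxf.mem_of_derivable y hyX)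
    exact z.neg_mem_iff.1 (hxz _ (x.mem_of_PF_imp (.dot2f X) hdia))
      (isNormalBox_boxf.mem_of_derivable z hzX)
  obtain ⟨u, hu⟩ := exists_MCS_superset hcon
  exact ⟨u, fun Z hZ => hu (Or.inl hZ), fun Z hZ => hu (Or.inr hZ)⟩

theorem pfFrameConditions : PFFrameConditions (Rel .boxp) (Rel .boxf) where
  S_refl x Z hZ := x.mem_of_PF_imp (.tf Z) hZ
  S_trans hxy hyz Z hZ := hyz Z (hxy _ (MCS.mem_of_PF_imp _ (.fourf Z) hZ))
  S_confluent := rel_boxf_confluent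
  S_comp_R hxy hyz Z hZ := hyz Z ((boxp_mem_iff_of_rel_boxf hxy).2 hZ)
  R_comp_S hxy hyz Z hZ := hyz Z (hxy _ (MCS.mem_of_PF_imp _ (.pf3 Z) hZ))
  converse_S_comp_R hxy hxz Z hZ := hxz Z ((boxp_mem_iff_of_rel_boxf hxy).1 hZ)

end MCS

open scoped Classical in
noncomputable def satValuation {W : Type} (R S : W → W → Prop) (V : W → ℕ → Prop) (w : W) :
    BoolValuation where
  toFun X := decide (Sat R S V w X)
  map_neg B := by by_cases h : Sat R S V w B <;> simp [Sat, h]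
  map_and B C := by by_cases h : Sat R S V w B <;> simp [Sat, h]
  map_or B C := by by_cases h : Sat R S V w B <;> simp [Sat, h]
  map_imp B C := by by_cases h : Sat R S V w B <;> simp [Sat, h]

section Kripke

variable {W : Type} {R S : W → W → Prop} {V : W → ℕ → Prop}

theorem sat_iff_satValuation {w : W} {X : Formula} :
    Sat R S V w X ↔ satValuation R S V w X = true := by
  simp [satValuation]

theorem sat_of_taut {A : Formula} (h : Taut A) (w : W) : Sat R S V w A :=
  sat_iff_satValuation.2 (h.valuation_eq_true _)

theorem sat_impList_iff {w : W} {L : List Formula} {X : Formula} :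
    Sat R S V w (impList L X) ↔ ((∀ Z ∈ L, Sat R S V w Z) → Sat R S V w X) := by
  simp only [sat_iff_satValuation, BoolValuation.impList_eq_true]

theorem sat_lob_of_forall_rel (hR : ∀ {x y z}, R x y → R y z → R x z) {w : W} {B : Formula}
    (h : ∀ y, R w y → Sat R S V y (.imp (.boxp (.imp (.boxp B) B)) (.boxp B))) :
    Sat R S V w (.imp (.boxp (.imp (.boxp B) B)) (.boxp B)) := fun hw y hwy =>
  hw y hwy (h y hwy fun z hyz => hw z (hR hwy hyz))

theorem PFFrameConditions.sat_of_PF (hF : PFFrameConditions R S)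
    (hlob : ∀ w B, Sat R S V w (.imp (.boxp (.imp (.boxp B) B)) (.boxp B)))
    {A : Formula} (hA : PF A) (w : W) : Sat R S V w A := by
  induction hA generalizing w with
  | taut h => exact sat_of_taut h w
  | kp | kf => exact fun hXY hX y hy => hXY y hy (hX y hy)
  | lob B => exact hlob w B
  | tf => exact fun h => h w (hF.S_refl w)
  | fourf => exact fun h y hwy z hyz => h z (hF.S_trans hwy hyz)
  | dot2f =>
    intro h z hwz hz
    refine h fun y hwy hy => ?_
    obtain ⟨u, hyu, hzu⟩ := hF.S_confluent hwy hwz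
    exact hz u hzu (hy u hyu)
  | pf1 => exact fun h y hwy z hyz => h z (hF.S_comp_R hwy hyz)
  | pf2 => exact fun h y hwy hy => h fun z hwz => hy z (hF.converse_S_comp_R hwy hwz)
  | pf3 => exact fun h y hwy z hyz => h z (hF.R_comp_S hwy hyz)
  | mp _ _ ihXY ihX => exact ihXY w (ihX w)
  | necp _ ih | necf _ ih => exact fun y _ => ih y

end Kripke

namespace Tower

abbrev World : Type := (ℕ × MCS) ⊕ MCS

def S : World → World → Prop
  | .inl (k, v), .inl (j, u) => j = k ∧ v.Rel .boxf u
  | .inr x, .inr y => x.Rel .boxf y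
  | .inl _, .inr _ | .inr _, .inl _ => False

def V : World → ℕ → Prop
  | .inl (_, v), n => .var n ∈ v
  | .inr x, n => .var n ∈ x

variable (w₀ : MCS)

def R : World → World → Prop
  | .inl (k, _), .inl (j, u) => j < k ∧ w₀.Rel .boxf u
  | .inl _, .inr x => w₀.Rel .boxp x
  | .inr x, .inr y => x.Rel .boxp y
  | .inr _, .inl _ => False

abbrev Holds (p : World) (X : Formula) : Prop := Sat (R w₀) S V p X

variable {w₀}

theorem R_trans {p q r : World} (hpq : R w₀ p q) (hqr : R w₀ q r) : R w₀ p r := by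
  rcases p with ⟨k, v⟩ | x <;> rcases q with ⟨j, u⟩ | y <;> rcases r with ⟨i, t⟩ | z <;>
    simp only [R] at hpq hqr ⊢
  · exact ⟨hqr.1.trans hpq.1, hqr.2⟩
  · exact hqr
  · exact MCS.rel_boxp_trans hpq hqr
  · exact MCS.rel_boxp_trans hpq hqr

theorem R_inl_iff {k : ℕ} {v v' : MCS} {q : World} :
    R w₀ (.inl (k, v)) q ↔ R w₀ (.inl (k, v')) q := by
  rcases q with ⟨j, u⟩ | y <;> rfl

theorem frameConditions : PFFrameConditions (R w₀) S where
  S_refl := by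
    rintro (⟨k, v⟩ | x)
    exacts [⟨rfl, MCS.pfFrameConditions.S_refl v⟩, MCS.pfFrameConditions.S_refl x]
  S_trans {p q r} hpq hqr := by
    rcases p with ⟨k, v⟩ | x <;> rcases q with ⟨j, u⟩ | y <;> rcases r with ⟨i, t⟩ | z <;>
      simp only [S] at hpq hqr ⊢
    · exact ⟨hqr.1.trans hpq.1, MCS.pfFrameConditions.S_trans hpq.2 hqr.2⟩
    · exact MCS.pfFrameConditions.S_trans hpq hqr
  S_confluent {p q r} hpq hpr := by
    rcases p with ⟨k, v⟩ | x <;> rcases q with ⟨j, u⟩ | y <;> rcases r with ⟨i, t⟩ | z <;>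
      simp only [S] at hpq hpr
    · obtain ⟨s, hus, hts⟩ := MCS.pfFrameConditions.S_confluent hpq.2 hpr.2
      exact ⟨.inl (k, s), ⟨hpq.1.symm, hus⟩, ⟨hpr.1.symm, hts⟩⟩
    · obtain ⟨s, hys, hzs⟩ := MCS.pfFrameConditions.S_confluent hpq hpr
      exact ⟨.inr s, hys, hzs⟩
  S_comp_R {p q r} hpq hqr := by
    rcases p with ⟨k, v⟩ | x <;> rcases q with ⟨j, u⟩ | y <;> simp only [S] at hpq
    · exact hpq.1 ▸ R_inl_iff.1 hqr
    · rcases r with ⟨i, t⟩ | z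
      · exact hqr.elim
      · exact MCS.pfFrameConditions.S_comp_R hpq hqr
  R_comp_S {p q r} hpq hqr := by
    rcases p with ⟨k, v⟩ | x <;> rcases q with ⟨j, u⟩ | y <;> rcases r with ⟨i, t⟩ | z <;>
      simp only [R, S] at hpq hqr ⊢
    · exact ⟨hqr.1 ▸ hpq.1, MCS.pfFrameConditions.S_trans hpq.2 hqr.2⟩
    · exact MCS.pfFrameConditions.R_comp_S hpq hqr
    · exact MCS.pfFrameConditions.R_comp_S hpq hqr
  converse_S_comp_R {p q r} hpq hpr := by
    rcases p with ⟨k, v⟩ | x <;> rcases q with ⟨j, u⟩ | y <;> simp only [S] at hpq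
    · exact hpq.1 ▸ R_inl_iff.1 hpr
    · rcases r with ⟨i, t⟩ | z
      · exact hpr.elim
      · exact MCS.pfFrameConditions.converse_S_comp_R hpq hpr

theorem holds_inl_boxp_iff {k : ℕ} {v : MCS} {Y : Formula} :
    Holds w₀ (.inl (k, v)) (.boxp Y) ↔
      (∀ j < k, ∀ u : MCS, w₀.Rel .boxf u → Holds w₀ (.inl (j, u)) Y) ∧
        ∀ x : MCS, w₀.Rel .boxp x → Holds w₀ (.inr x) Y :=
  ⟨fun h => ⟨fun j hj u hu => h (.inl (j, u)) ⟨hj, hu⟩, fun x hx => h (.inr x) hx⟩,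
    fun h => by rintro (⟨j, u⟩ | x) hq; exacts [h.1 j hq.1 u hq.2, h.2 x hq]⟩

theorem holds_inl_boxf_iff {k : ℕ} {v : MCS} {Y : Formula} :
    Holds w₀ (.inl (k, v)) (.boxf Y) ↔ ∀ u : MCS, v.Rel .boxf u → Holds w₀ (.inl (k, u)) Y :=
  ⟨fun h u hu => h (.inl (k, u)) ⟨rfl, hu⟩,
    fun h => by rintro (⟨j, u⟩ | x) hq; exacts [hq.1 ▸ h u hq.2, hq.elim]⟩

theorem holds_inr_boxp_iff {x : MCS} {Y : Formula} :
    Holds w₀ (.inr x) (.boxp Y) ↔ ∀ y : MCS, x.Rel .boxp y → Holds w₀ (.inr y) Y :=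
  ⟨fun h y hy => h (.inr y) hy, fun h => by rintro (⟨j, u⟩ | y) hq; exacts [hq.elim, h y hq]⟩

theorem holds_inr_boxf_iff {x : MCS} {Y : Formula} :
    Holds w₀ (.inr x) (.boxf Y) ↔ ∀ y : MCS, x.Rel .boxf y → Holds w₀ (.inr y) Y :=
  ⟨fun h y hy => h (.inr y) hy, fun h => by rintro (⟨j, u⟩ | y) hq; exacts [hq.elim, h y hq]⟩

theorem holds_inr_iff (x : MCS) (X : Formula) : Holds w₀ (.inr x) X ↔ X ∈ x := by
  induction X generalizing x with
  | var n => rfl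
  | neg Y ih => exact (not_congr (ih x)).trans x.neg_mem_iff.symm
  | and Y Z ihY ihZ => exact (and_congr (ihY x) (ihZ x)).trans x.and_mem_iff.symm
  | or Y Z ihY ihZ => exact (or_congr (ihY x) (ihZ x)).trans x.or_mem_iff.symm
  | imp Y Z ihY ihZ => exact (imp_congr (ihY x) (ihZ x)).trans x.imp_mem_iff.symm
  | boxp Y ih =>
    rw [holds_inr_boxp_iff, isNormalBox_boxp.mem_iff]
    exact forall₂_congr fun y _ => ih y
  | boxf Y ih =>
    rw [holds_inr_boxf_iff, isNormalBox_boxf.mem_iff]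
    exact forall₂_congr fun y _ => ih y

theorem holds_lob (p : World) (B : Formula) :
    Holds w₀ p (.imp (.boxp (.imp (.boxp B) B)) (.boxp B)) := by
  rcases p with ⟨k, v⟩ | x
  · induction k using Nat.strong_induction_on generalizing v with
    | _ k ih =>
      refine sat_lob_of_forall_rel (R := R w₀) R_trans ?_
      rintro (⟨j, u⟩ | y) hq
      exacts [ih j hq.1 u, (holds_inr_iff y _).2 (y.mem_of_PF (.lob B))]
  · exact (holds_inr_iff x _).2 (x.mem_of_PF (.lob B))

theorem holds_of_PF {A : Formula} (h : PF A) (p : World) : Holds w₀ p A :=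
  frameConditions.sat_of_PF holds_lob h p

theorem holds_inl_iff_of_deg_le {X : Formula} {k k' : ℕ} (hk : deg X ≤ k) (hkk' : k ≤ k')
    (v : MCS) : Holds w₀ (.inl (k, v)) X ↔ Holds w₀ (.inl (k', v)) X := by
  induction X generalizing k k' v with
  | var n => rfl
  | neg Y ih => exact not_congr (ih hk hkk' v)
  | and Y Z ihY ihZ =>
    exact and_congr (ihY (le_of_max_le_left hk) hkk' v) (ihZ (le_of_max_le_right hk) hkk' v)
  | or Y Z ihY ihZ =>
    exact or_congr (ihY (le_of_max_le_left hk) hkk' v) (ihZ (le_of_max_le_right hk) hkk' v)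
  | imp Y Z ihY ihZ =>
    exact imp_congr (ihY (le_of_max_le_left hk) hkk' v) (ihZ (le_of_max_le_right hk) hkk' v)
  | boxf Y ih =>
    simp only [holds_inl_boxf_iff]
    exact forall₂_congr fun u _ => ih hk hkk' u
  | boxp Y ih =>
    have hY : deg Y < k := hk
    simp only [holds_inl_boxp_iff]
    refine and_congr_left'
      ⟨fun h j hj u hu => ?_, fun h j hj u hu => h j (hj.trans_le hkk') u hu⟩
    rcases lt_or_ge j k with hjk | hkj
    · exact h j hjk u hu
    · exact (ih le_rfl (hY.le.trans hkj) u).1 (h _ hY u hu)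

theorem holds_inl_reflection {C : Formula} {n : ℕ} (hC : deg C < n) {v : MCS}
    (hv : w₀.Rel .boxf v) : Holds w₀ (.inl (n, v)) (.imp (.boxp C) (.boxf C)) := by
  intro h
  refine holds_inl_boxf_iff.2 fun u hu => ?_
  have hu₀ : w₀.Rel .boxf u := MCS.pfFrameConditions.S_trans hv hu
  exact (holds_inl_iff_of_deg_le le_rfl hC.le u).1 ((holds_inl_boxp_iff.1 h).1 _ hC u hu₀)

theorem holds_inl_iff_mem {X : Formula}
    (hΦ : ∀ C, .boxp C ∈ subf X → .imp (.boxp C) (.boxf C) ∈ w₀) {k : ℕ} {v : MCS}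
    (hv : w₀.Rel .boxf v) : Holds w₀ (.inl (k, v)) X ↔ X ∈ v := by
  induction X generalizing k v with
  | var n => rfl
  | neg Y ih =>
    exact (not_congr (ih (fun C hC => hΦ C (by simp [subf, hC])) hv)).trans v.neg_mem_iff.symm
  | and Y Z ihY ihZ =>
    exact (and_congr (ihY (fun C hC => hΦ C (by simp [subf, hC])) hv)
      (ihZ (fun C hC => hΦ C (by simp [subf, hC])) hv)).trans v.and_mem_iff.symm
  | or Y Z ihY ihZ =>
    exact (or_congr (ihY (fun C hC => hΦ C (by simp [subf, hC])) hv)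
      (ihZ (fun C hC => hΦ C (by simp [subf, hC])) hv)).trans v.or_mem_iff.symm
  | imp Y Z ihY ihZ =>
    exact (imp_congr (ihY (fun C hC => hΦ C (by simp [subf, hC])) hv)
      (ihZ (fun C hC => hΦ C (by simp [subf, hC])) hv)).trans v.imp_mem_iff.symm
  | boxf Y ih =>
    rw [holds_inl_boxf_iff, isNormalBox_boxf.mem_iff]
    exact forall₂_congr fun u hu => ih (fun C hC => hΦ C (by simp [subf, hC]))
      (MCS.pfFrameConditions.S_trans hv hu)
  | boxp Y ih =>
    have ihY := fun {j u} => ih (fun C hC => hΦ C (by simp [subf, hC])) (k := j) (v := u)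
    rw [holds_inl_boxp_iff, MCS.boxp_mem_iff_of_rel_boxf hv]
    constructor
    · rintro ⟨-, h⟩
      exact (isNormalBox_boxp.mem_iff w₀).2 fun x hx => (holds_inr_iff x Y).1 (h x hx)
    · intro h
      have hY : .boxf Y ∈ w₀ := w₀.mem_of_imp_mem (hΦ Y (by simp [subf])) h
      exact ⟨fun j _ u hu => (ihY hu).2 (hu Y hY),
        fun x hx => (holds_inr_iff x Y).2 (hx Y h)⟩

end Tower

theorem PFomega.exists_PF_impList {A : Formula} (h : PFomega A) :
    ∃ Cs : List Formula, PF (impList (Cs.map fun C => .imp (.boxp C) (.boxf C)) A) := by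
  induction h with
  | ofPF h => exact ⟨[], h⟩
  | reflAx C => exact ⟨[C], .taut (.of_forall_valuation fun f => by simp [impList])⟩
  | mp _ _ ihXY ihX =>
    obtain ⟨Cs, hXY⟩ := ihXY
    obtain ⟨Ds, hX⟩ := ihX
    refine ⟨Cs ++ Ds, .of_taut_consequence (L := [_, _]) (by simpa using ⟨hXY, hX⟩)
      fun f => ?_⟩
    simp only [List.mem_cons, List.not_mem_nil, or_false, forall_eq_or_imp, forall_eq,
      f.impList_eq_true, f.imp_eq_true, List.map_append, List.mem_append]
    grind

theorem PFomega.of_impList {L : List Formula} {X : Formula} (hX : PFomega (impList L X))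
    (hL : ∀ Z ∈ L, PFomega Z) : PFomega X := by
  induction L with
  | nil => exact hX
  | cons Z L ih => exact ih (hX.mp (hL Z (by simp))) fun Y hY => hL Y (by simp [hY])

theorem mem_Phi {A Z : Formula} :
    Z ∈ Phi A ↔ ∃ C, .boxp C ∈ subf A ∧ Z = .imp (.boxp C) (.boxf C) := by
  simp only [Phi, List.mem_filterMap]
  constructor
  · rintro ⟨B, hB, hZ⟩
    cases B <;> simp at hZ
    exact ⟨_, hB, hZ.symm⟩
  · rintro ⟨C, hC, rfl⟩
    exact ⟨_, hC, rfl⟩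

theorem statement_11 (A : Formula) :
    PF (.imp (conjList (Phi A)) A) ↔ PFomega A := by
  constructor
  · intro h
    have hPhi : PF (impList (Phi A) A) :=
      .of_taut_consequence (L := [_]) (by simpa using h) fun f => by simp
    refine .of_impList (.ofPF hPhi) fun Z hZ => ?_
    obtain ⟨C, -, rfl⟩ := mem_Phi.1 hZ
    exact .reflAx C
  · intro h
    by_contra hA
    obtain ⟨w₀, hw₀⟩ := exists_MCS_superset (Γ := insert (.neg A) {Z | Z ∈ Phi A})
      fun hbot => hA (.conjList_imp_of_derivable (.by_contra hbot))
    obtain ⟨Cs, hCs⟩ := h.exists_PF_impList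
    obtain ⟨n, hn⟩ : ∃ n, ∀ C ∈ Cs, deg C < n := ⟨(Cs.map deg).sum + 1,
      fun C hC => Nat.lt_succ_of_le (List.le_sum_of_mem (List.mem_map_of_mem hC))⟩
    have hv₀ : w₀.Rel .boxf w₀ := MCS.pfFrameConditions.S_refl w₀
    have hA : Tower.Holds w₀ (.inl (n, w₀)) A := sat_impList_iff.1 (Tower.holds_of_PF hCs _)
      (by simpa using fun C hC => Tower.holds_inl_reflection (hn C hC) hv₀)
    rw [Tower.holds_inl_iff_mem (fun C hC => hw₀ (Or.inr (mem_Phi.2 ⟨C, hC, rfl⟩))) hv₀] at hA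
    exact w₀.neg_mem_iff.1 (hw₀ (Set.mem_insert _ _)) hA

end PFPaper
end

section
/- The logic GL⊗Triv is a conservative extension of GL: for any formula A of the unimodal language L_p (containing only the modal operator □p), A is a theorem of GL⊗Triv if and only if A is a theorem of GL. -/
namespace PFPaper

/-- Erase `□f` from a bimodal formula. -/
def eraseF : Formula → LpForm
  | .var n => .var n
  | .neg A => .neg (eraseF A)
  | .and A B => .and (eraseF A) (eraseF B)
  | .or A B => .or (eraseF A) (eraseF B)
  | .imp A B => .imp (eraseF A) (eraseF B)
  | .boxp A => .box (eraseF A)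
  | .boxf A => eraseF A

lemma eraseF_toFormula (A : LpForm) : eraseF A.toFormula = A := by
  induction A <;> simp [LpForm.toFormula, eraseF, *]

lemma taut_erase {A : Formula} (h : Taut A) : TautLp (eraseF A) := by
  intro f hn ha ho hi
  have := h (fun B => f (eraseF B))
    (fun B => by simp [eraseF, hn])
    (fun B C => by simp [eraseF, ha])
    (fun B C => by simp [eraseF, ho])
    (fun B C => by simp [eraseF, hi])
  exact this

lemma tautLp_iff_self (A : LpForm) : TautLp (.and (.imp A A) (.imp A A)) := by
  intro f hn ha ho hi
  simp [ha, hi]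

lemma gltriv_erase {A : Formula} (h : GLTriv A) : GLLogic (eraseF A) := by
  induction h with
  | taut ht => exact GLLogic.taut (taut_erase ht)
  | kp A B => exact GLLogic.k _ _
  | lob A => exact GLLogic.lob _
  | triv A => exact GLLogic.taut (tautLp_iff_self _)
  | mp _ _ ih1 ih2 => exact GLLogic.mp ih1 ih2
  | necp _ ih => exact GLLogic.nec ih

lemma taut_toFormula {A : LpForm} (h : TautLp A) : Taut A.toFormula := by
  intro f hn ha ho hi
  exact h (fun B => f B.toFormula)
    (fun B => by simp [LpForm.toFormula, hn])
    (fun B C => by simp [LpForm.toFormula, ha])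
    (fun B C => by simp [LpForm.toFormula, ho])
    (fun B C => by simp [LpForm.toFormula, hi])

lemma gl_toFormula {A : LpForm} (h : GLLogic A) : GLTriv A.toFormula := by
  induction h with
  | taut ht => exact GLTriv.taut (taut_toFormula ht)
  | k A B => exact GLTriv.kp _ _
  | lob A => exact GLTriv.lob _
  | mp _ _ ih1 ih2 => exact GLTriv.mp ih1 ih2
  | nec _ ih => exact GLTriv.necp ih

theorem statement_13 (A : LpForm) :
    GLTriv A.toFormula ↔ GLLogic A := by
  constructor
  · intro h
    have := gltriv_erase h
    rwa [eraseF_toFormula] at this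
  · exact gl_toFormula

end PFPaper
end

section
/- The logic PF is a conservative extension of GL: for any formula A of the unimodal language L_p (containing only the modal operator □p), A is a theorem of PF if and only if A is a theorem of GL. -/
namespace PFPaper

/-- Erase `□f` and turn `□p` into `box`: the Triv interpretation. -/
def trv : Formula → LpForm
  | .var n => .var n
  | .neg A => .neg (trv A)
  | .and A B => .and (trv A) (trv B)
  | .or A B => .or (trv A) (trv B)
  | .imp A B => .imp (trv A) (trv B)
  | .boxp A => .box (trv A)
  | .boxf A => trv A

lemma trv_toFormula (A : LpForm) : trv A.toFormula = A := by
  induction A <;> simp [LpForm.toFormula, trv, *]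

lemma tautLp_imp_self (X : LpForm) : TautLp (.imp X X) := by
  intro f _ _ _ hi
  rw [hi]
  cases f X <;> simp

lemma trv_taut {A : Formula} (h : Taut A) : TautLp (trv A) := by
  intro g hn ha ho hi
  exact h (fun C => g (trv C))
    (fun B => by simp [trv, hn])
    (fun B C => by simp [trv, ha])
    (fun B C => by simp [trv, ho])
    (fun B C => by simp [trv, hi])

lemma pf_to_gl {A : Formula} (h : PF A) : GLLogic (trv A) := by
  induction h with
  | taut h => exact .taut (trv_taut h)
  | kp A B => exact .k _ _
  | lob A => exact .lob _
  | kf A B => exact .taut (tautLp_imp_self _)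
  | tf A => exact .taut (tautLp_imp_self _)
  | fourf A => exact .taut (tautLp_imp_self _)
  | dot2f A => exact .taut (tautLp_imp_self _)
  | pf1 A => exact .taut (tautLp_imp_self _)
  | pf2 A => exact .taut (tautLp_imp_self _)
  | pf3 A => exact .taut (tautLp_imp_self _)
  | mp h1 h2 ih1 ih2 => exact .mp ih1 ih2
  | necp h ih => exact .nec ih
  | necf h ih => exact ih

lemma gl_to_pf {A : LpForm} (h : GLLogic A) : PF A.toFormula := by
  induction h with
  | taut h => exact .taut (taut_toFormula h)
  | k A B => exact .kp _ _
  | lob A => exact .lob _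
  | mp h1 h2 ih1 ih2 => exact .mp ih1 ih2
  | nec h ih => exact .necp ih

theorem statement_14 (A : LpForm) :
    PF A.toFormula ↔ GLLogic A := by
  constructor
  · intro h
    have := pf_to_gl h
    rwa [trv_toFormula] at this
  · exact gl_to_pf

end PFPaper
end

section
/- The logic PF is a conservative extension of S4.2: for any formula A of the unimodal language L_f (containing only the modal operator □f), A is a theorem of PF if and only if A is a theorem of S4.2. -/
namespace PFPaper

/-- A fixed tautology of `L_f`. -/
def topLf : LfForm := .imp (.var 0) (.var 0)

/-- Translation of `L_pf` into `L_f`: `□p A ↦ ⊤`, `□f ↦ box`. -/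
def tr : Formula → LfForm
  | .var n => .var n
  | .neg A => .neg (tr A)
  | .and A B => .and (tr A) (tr B)
  | .or A B => .or (tr A) (tr B)
  | .imp A B => .imp (tr A) (tr B)
  | .boxp _ => topLf
  | .boxf A => .box (tr A)

lemma tautLf_top : TautLf topLf := by
  intro f hn ha ho hi
  rw [topLf, hi]
  cases f (.var 0) <;> rfl

lemma s42_imp_of_concl {A B : LfForm} (h : S42 B) : S42 (.imp A B) := by
  refine S42.mp (S42.taut ?_) h
  intro f hn ha ho hi
  rw [hi, hi]
  cases f B <;> cases f A <;> rfl

lemma tr_sound {A : Formula} (h : PF A) : S42 (tr A) := by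
  induction h with
  | taut hA =>
      apply S42.taut
      intro f hn ha ho hi
      exact hA (fun B => f (tr B)) (fun B => hn (tr B)) (fun B C => ha (tr B) (tr C))
        (fun B C => ho (tr B) (tr C)) (fun B C => hi (tr B) (tr C))
  | kp A B =>
      apply S42.taut
      intro f hn ha ho hi
      simp only [tr, hi, topLf]
      cases f (.var 0) <;> rfl
  | lob A =>
      apply S42.taut
      intro f hn ha ho hi
      simp only [tr, hi, topLf]
      cases f (.var 0) <;> rfl
  | kf A B => exact S42.k _ _
  | tf A => exact S42.t _
  | fourf A => exact S42.four (tr A)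
  | dot2f A => exact S42.dot2 (tr A)
  | pf1 A => exact s42_imp_of_concl (S42.nec (S42.taut tautLf_top))
  | pf2 A =>
      apply S42.taut
      intro f hn ha ho hi
      simp only [tr, diap, hi, hn, topLf]
      cases f (.var 0) <;> rfl
  | pf3 A =>
      apply S42.taut
      intro f hn ha ho hi
      simp only [tr, hi, topLf]
      cases f (.var 0) <;> rfl
  | mp _ _ ih1 ih2 => exact S42.mp ih1 ih2
  | necp _ _ => exact S42.taut tautLf_top
  | necf _ ih => exact S42.nec ih

lemma tr_toFormula (A : LfForm) : tr A.toFormula = A := by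
  induction A <;> simp [LfForm.toFormula, tr, *]

lemma s42_to_pf {A : LfForm} (h : S42 A) : PF A.toFormula := by
  induction h with
  | taut hA =>
      apply PF.taut
      intro g hn ha ho hi
      exact hA (fun B => g B.toFormula) (fun B => hn B.toFormula)
        (fun B C => ha B.toFormula C.toFormula)
        (fun B C => ho B.toFormula C.toFormula)
        (fun B C => hi B.toFormula C.toFormula)
  | k A B => exact PF.kf A.toFormula B.toFormula
  | t A => exact PF.tf A.toFormula
  | four A => exact PF.fourf A.toFormula
  | dot2 A => exact PF.dot2f A.toFormula
  | mp _ _ ih1 ih2 => exact PF.mp ih1 ih2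
  | nec _ ih => exact PF.necf ih

theorem statement_17 (A : LfForm) :
    PF A.toFormula ↔ S42 A := by
  constructor
  · intro h
    have := tr_sound h
    rwa [tr_toFormula] at this
  · exact s42_to_pf

end PFPaper
end

section
/- For any formulas A and B of the bimodal language L_pf, PF proves both equivalences: □f(□p A ∨ B) ↔ (□p A ∨ □f B), and □f(◇p A ∨ B) ↔ (◇p A ∨ □f B). -/
namespace PFPaper

section Aux18

lemma taut_or_l (X Y : Formula) : Taut (.imp X (.or X Y)) := by
  intro f hn ha ho hi; simp only [hn, ha, ho, hi]; cases f X <;> cases f Y <;> rfl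
lemma taut_or_r (X Y : Formula) : Taut (.imp Y (.or X Y)) := by
  intro f hn ha ho hi; simp only [hn, ha, ho, hi]; cases f X <;> cases f Y <;> rfl
lemma taut_case (X Y Z : Formula) :
    Taut (.imp (.imp X Z) (.imp (.imp Y Z) (.imp (.or X Y) Z))) := by
  intro f hn ha ho hi; simp only [hn, ha, ho, hi]
  cases f X <;> cases f Y <;> cases f Z <;> rfl
lemma taut_exp (P B : Formula) :
    Taut (.imp (.neg P) (.imp (.or P B) B)) := by
  intro f hn ha ho hi; simp only [hn, ha, ho, hi]; cases f P <;> cases f B <;> rfl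
lemma taut_merge (P D Q : Formula) :
    Taut (.imp (.imp (.neg P) (.imp D Q)) (.imp D (.or P Q))) := by
  intro f hn ha ho hi; simp only [hn, ha, ho, hi]
  cases f P <;> cases f D <;> cases f Q <;> rfl
lemma taut_trans (X Y Z : Formula) :
    Taut (.imp (.imp X Y) (.imp (.imp Y Z) (.imp X Z))) := by
  intro f hn ha ho hi; simp only [hn, ha, ho, hi]
  cases f X <;> cases f Y <;> cases f Z <;> rfl
lemma taut_contra (X Y : Formula) :
    Taut (.imp (.imp X Y) (.imp (.neg Y) (.neg X))) := by
  intro f hn ha ho hi; simp only [hn, ha, ho, hi]; cases f X <;> cases f Y <;> rfl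
lemma taut_dne (X : Formula) : Taut (.imp (.neg (.neg X)) X) := by
  intro f hn ha ho hi; simp only [hn, ha, ho, hi]; cases f X <;> rfl
lemma taut_dni (X : Formula) : Taut (.imp X (.neg (.neg X))) := by
  intro f hn ha ho hi; simp only [hn, ha, ho, hi]; cases f X <;> rfl
lemma taut_pair (X Y : Formula) :
    Taut (.imp (.imp X Y) (.imp (.imp Y X) (.and (.imp X Y) (.imp Y X)))) := by
  intro f hn ha ho hi; simp only [hn, ha, ho, hi]; cases f X <;> cases f Y <;> rfl

lemma PF.monof {X Y : Formula} (h : PF (.imp X Y)) : PF (.imp (.boxf X) (.boxf Y)) :=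
  PF.mp (PF.kf X Y) (PF.necf h)

lemma PF.monop {X Y : Formula} (h : PF (.imp X Y)) : PF (.imp (.boxp X) (.boxp Y)) :=
  PF.mp (PF.kp X Y) (PF.necp h)

lemma PF.trans {X Y Z : Formula} (h1 : PF (.imp X Y)) (h2 : PF (.imp Y Z)) :
    PF (.imp X Z) :=
  PF.mp (PF.mp (PF.taut (taut_trans X Y Z)) h1) h2

lemma PF.contra {X Y : Formula} (h : PF (.imp X Y)) :
    PF (.imp (.neg Y) (.neg X)) :=
  PF.mp (PF.taut (taut_contra X Y)) h

/-- If `P → □f P`, then `(P ∨ □f B) → □f (P ∨ B)`. -/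
lemma back_dir (P B : Formula) (hP : PF (.imp P (.boxf P))) :
    PF (.imp (.or P (.boxf B)) (.boxf (.or P B))) := by
  have a : PF (.imp P (.boxf (.or P B))) :=
    hP.trans (PF.monof (PF.taut (taut_or_l P B)))
  have b : PF (.imp (.boxf B) (.boxf (.or P B))) :=
    PF.monof (PF.taut (taut_or_r P B))
  exact PF.mp (PF.mp (PF.taut (taut_case P (.boxf B) (.boxf (.or P B)))) a) b

/-- If `¬P → □f ¬P`, then `□f (P ∨ B) → (P ∨ □f B)`. -/
lemma fwd_dir (P B : Formula) (hN : PF (.imp (.neg P) (.boxf (.neg P)))) :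
    PF (.imp (.boxf (.or P B)) (.or P (.boxf B))) := by
  have c1 : PF (.imp (.boxf (.neg P)) (.boxf (.imp (.or P B) B))) :=
    PF.monof (PF.taut (taut_exp P B))
  have c2 : PF (.imp (.boxf (.imp (.or P B) B)) (.imp (.boxf (.or P B)) (.boxf B))) :=
    PF.kf (.or P B) B
  have d : PF (.imp (.neg P) (.imp (.boxf (.or P B)) (.boxf B))) :=
    (hN.trans c1).trans c2
  exact PF.mp (PF.taut (taut_merge P (.boxf (.or P B)) (.boxf B))) d

theorem statement_18 (A B : Formula) :
    PF (iffF (.boxf (.or (.boxp A) B)) (.or (.boxp A) (.boxf B))) ∧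
    PF (iffF (.boxf (.or (diap A) B)) (.or (diap A) (.boxf B))) := by
  have mkiff : ∀ X Y : Formula, PF (.imp X Y) → PF (.imp Y X) → PF (iffF X Y) := by
    intro X Y h1 h2
    exact PF.mp (PF.mp (PF.taut (taut_pair X Y)) h1) h2
  constructor
  · apply mkiff
    · apply fwd_dir
      -- ¬□pA → □f ¬□pA
      have u : PF (.imp (.neg (.boxp A)) (diap (.neg A))) :=
        PF.contra (PF.monop (PF.taut (taut_dne A)))
      have v : PF (.imp (diap (.neg A)) (.neg (.boxp A))) :=
        PF.contra (PF.monop (PF.taut (taut_dni A)))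
      exact (u.trans (PF.pf2 (.neg A))).trans (PF.monof v)
    · exact back_dir _ _ (PF.pf1 A)
  · apply mkiff
    · apply fwd_dir
      -- ¬◇pA → □f ¬◇pA, where ¬◇pA = ¬¬□p¬A
      have u : PF (.imp (.neg (diap A)) (.boxp (.neg A))) :=
        PF.taut (taut_dne (.boxp (.neg A)))
      have v : PF (.imp (.boxp (.neg A)) (.neg (diap A))) :=
        PF.taut (taut_dni (.boxp (.neg A)))
      exact (u.trans (PF.pf1 (.neg A))).trans (PF.monof v)
    · exact back_dir _ _ (PF.pf2 A)

end Aux18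

end PFPaper
end
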